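/- arXiv:quant-ph/0003048 — 3 statements merged into one kernel-verified Lean document; each statement's English description precedes it below -/
import Mathlib

section
/- For every fixed density matrix σ, the function ρ ↦ S(ρ|σ) is concave on the set of density matrices: for all density matrices ρ₁, ρ₂ and all t ∈ [0,1], S(tρ₁ + (1−t)ρ₂ | σ) ≥ t·S(ρ₁|σ) + (1−t)·S(ρ₂|σ). -/
open Matrix
open scoped ComplexOrder

/-- `η(A) = −∑ᵢ λᵢ ln λᵢ` where the `λᵢ` are the eigenvalues of the Hermitian matrix `A`
listed with multiplicity (with the convention `0 · ln 0 = 0`, which holds automatically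
since `Real.log 0 = 0`). -/
noncomputable def eta {n : ℕ} (A : Matrix (Fin n) (Fin n) ℂ) : ℝ :=
  if h : A.IsHermitian then -∑ i, h.eigenvalues i * Real.log (h.eigenvalues i) else 0

/-- `F(ρ, Q) = η(QρQ) + tr(QρQ)·ln tr(QρQ)`. -/
noncomputable def condF {n : ℕ} (ρ Q : Matrix (Fin n) (Fin n) ℂ) : ℝ :=
  eta (Q * ρ * Q) + (Q * ρ * Q).trace.re * Real.log (Q * ρ * Q).trace.re

/-- The orthogonal projection onto the eigenspace of a Hermitian matrix for the value `c`. -/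
noncomputable def eigProj {n : ℕ} {σ : Matrix (Fin n) (Fin n) ℂ} (h : σ.IsHermitian) (c : ℝ) :
    Matrix (Fin n) (Fin n) ℂ :=
  (h.eigenvectorUnitary : Matrix (Fin n) (Fin n) ℂ) *
    Matrix.diagonal (fun i => if h.eigenvalues i = c then (1 : ℂ) else 0) *
    star (h.eigenvectorUnitary : Matrix (Fin n) (Fin n) ℂ)

/-- The conditional entropy `S(ρ|σ) = ∑ⱼ tr(Qⱼ σ) · F(ρ, Qⱼ)`, the sum running over the
distinct eigenvalues `σⱼ` of `σ`, with `Qⱼ` the corresponding eigenprojections. -/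
noncomputable def condS {n : ℕ} (ρ σ : Matrix (Fin n) (Fin n) ℂ) : ℝ :=
  if h : σ.IsHermitian then
    ∑ c ∈ Finset.image h.eigenvalues Finset.univ,
      (eigProj h c * σ).trace.re * condF ρ (eigProj h c)
  else 0

/-! ### Auxiliary scalar lemmas -/

/-- `klt a b = a * log (a / b)`, the basic relative-entropy term. -/
noncomputable def klt (a b : ℝ) : ℝ := a * Real.log (a / b)

lemma klt_eq {a b : ℝ} (ha : 0 ≤ a) (hab : a ≤ b) :
    Real.negMulLog a + a * Real.log b = -klt a b := by
  rcases eq_or_lt_of_le ha with h | h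
  · simp [klt, ← h, Real.negMulLog]
  · have hb : 0 < b := lt_of_lt_of_le h hab
    rw [klt, Real.log_div (ne_of_gt h) (ne_of_gt hb), Real.negMulLog]
    ring

lemma klt_smul {t x s : ℝ} (ht : 0 ≤ t) (hx : 0 ≤ x) :
    klt (t * x) (t * s) = t * klt x s := by
  rcases eq_or_lt_of_le ht with h | h
  · simp [klt, ← h]
  rcases eq_or_lt_of_le hx with h2 | h2
  · simp [klt, ← h2]
  · have : t * x / (t * s) = x / s := by
      rw [mul_div_mul_left _ _ (ne_of_gt h)]
    rw [klt, klt, this]; ring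

/-- The two-point log-sum inequality. -/
lemma logsum2 {a1 a2 b1 b2 : ℝ} (ha1 : 0 ≤ a1) (ha2 : 0 ≤ a2)
    (h1 : a1 ≤ b1) (h2 : a2 ≤ b2) :
    klt (a1 + a2) (b1 + b2) ≤ klt a1 b1 + klt a2 b2 := by
  have hb1 : 0 ≤ b1 := le_trans ha1 h1
  have hb2 : 0 ≤ b2 := le_trans ha2 h2
  rcases eq_or_lt_of_le hb1 with hb1' | hb1'
  · have : a1 = 0 := le_antisymm (hb1' ▸ h1) ha1
    simp [klt, this, ← hb1']
  rcases eq_or_lt_of_le hb2 with hb2' | hb2'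
  · have : a2 = 0 := le_antisymm (hb2' ▸ h2) ha2
    simp [klt, this, ← hb2']
  have hb : 0 < b1 + b2 := by linarith
  have hw1 : (0:ℝ) ≤ b1 / (b1 + b2) := div_nonneg hb1 hb.le
  have hw2 : (0:ℝ) ≤ b2 / (b1 + b2) := div_nonneg hb2 hb.le
  have hsum : b1 / (b1 + b2) + b2 / (b1 + b2) = 1 := by field_simp
  have key := Real.convexOn_mul_log.2 (Set.mem_Ici.mpr (div_nonneg ha1 hb1))
    (Set.mem_Ici.mpr (div_nonneg ha2 hb2)) hw1 hw2 hsum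
  have e1 : (b1 / (b1 + b2)) • (a1 / b1) + (b2 / (b1 + b2)) • (a2 / b2)
      = (a1 + a2) / (b1 + b2) := by
    simp only [smul_eq_mul]; field_simp
  rw [e1] at key
  have key2 : (b1 + b2) * ((a1 + a2) / (b1 + b2) * Real.log ((a1 + a2) / (b1 + b2)))
      ≤ (b1 + b2) * ((b1 / (b1 + b2)) • (a1 / b1 * Real.log (a1 / b1))
        + (b2 / (b1 + b2)) • (a2 / b2 * Real.log (a2 / b2))) :=
    mul_le_mul_of_nonneg_left key hb.le
  calc klt (a1 + a2) (b1 + b2)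
      = (b1 + b2) * ((a1 + a2) / (b1 + b2) * Real.log ((a1 + a2) / (b1 + b2))) := by
        rw [klt]; field_simp
    _ ≤ _ := key2
    _ = klt a1 b1 + klt a2 b2 := by
        rw [klt, klt, smul_eq_mul, smul_eq_mul]
        field_simp

/-- Joint concavity of the perspective `ψ(x,s) = −x ln x + x ln s`. -/
lemma psi_concave2 {t x1 s1 x2 s2 : ℝ} (ht0 : 0 ≤ t) (ht1 : t ≤ 1)
    (hx1 : 0 ≤ x1) (hs1 : x1 ≤ s1) (hx2 : 0 ≤ x2) (hs2 : x2 ≤ s2) :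
    t * (Real.negMulLog x1 + x1 * Real.log s1)
      + (1 - t) * (Real.negMulLog x2 + x2 * Real.log s2)
    ≤ Real.negMulLog (t * x1 + (1 - t) * x2)
      + (t * x1 + (1 - t) * x2) * Real.log (t * s1 + (1 - t) * s2) := by
  have ht1' : (0:ℝ) ≤ 1 - t := by linarith
  have hX : 0 ≤ t * x1 + (1 - t) * x2 := by positivity
  have hXS : t * x1 + (1 - t) * x2 ≤ t * s1 + (1 - t) * s2 := by
    have := mul_le_mul_of_nonneg_left hs1 ht0
    have := mul_le_mul_of_nonneg_left hs2 ht1'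
    linarith
  rw [klt_eq hX hXS, klt_eq hx1 hs1, klt_eq hx2 hs2]
  have h1 := logsum2 (mul_nonneg ht0 hx1) (mul_nonneg ht1' hx2)
    (mul_le_mul_of_nonneg_left hs1 ht0) (mul_le_mul_of_nonneg_left hs2 ht1')
  rw [klt_smul ht0 hx1, klt_smul ht1' hx2] at h1
  linarith

/-! ### Auxiliary matrix lemmas -/

lemma psd_diag_re_nonneg {n : ℕ} {M : Matrix (Fin n) (Fin n) ℂ} (hM : M.PosSemidef)
    (k : Fin n) : 0 ≤ (M k k).re := by
  have h := hM.dotProduct_mulVec_nonneg (Pi.single k 1)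
  simp [dotProduct, mulVec, Pi.single_apply, Finset.sum_ite_eq] at h
  rw [Complex.le_def] at h
  simpa using h.1

lemma psd_real_smul {n : ℕ} {M : Matrix (Fin n) (Fin n) ℂ} (hM : M.PosSemidef)
    {t : ℝ} (ht : 0 ≤ t) : (t • M).PosSemidef := by
  refine Matrix.PosSemidef.of_dotProduct_mulVec_nonneg ?_ ?_
  · show _ = _
    rw [conjTranspose_smul, star_trivial, hM.1.eq]
  · intro x
    have := hM.dotProduct_mulVec_nonneg x
    rw [smul_mulVec, dotProduct_smul]
    exact smul_nonneg (by exact_mod_cast ht) this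

lemma trace_eq_sum_eigenvalues {n : ℕ} {A : Matrix (Fin n) (Fin n) ℂ}
    (hA : A.IsHermitian) : A.trace = ∑ i, (hA.eigenvalues i : ℂ) := by
  conv_lhs => rw [hA.spectral_theorem, Unitary.conjStarAlgAut_apply]
  rw [Matrix.trace_mul_cycle, Unitary.coe_star_mul_self, one_mul, trace_diagonal]
  rfl

lemma trace_re_eq_sum_eigenvalues {n : ℕ} {A : Matrix (Fin n) (Fin n) ℂ}
    (hA : A.IsHermitian) : A.trace.re = ∑ i, hA.eigenvalues i := by
  rw [trace_eq_sum_eigenvalues hA, Complex.re_sum]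
  simp

lemma eta_eq {n : ℕ} {A : Matrix (Fin n) (Fin n) ℂ} (hA : A.IsHermitian) :
    eta A = ∑ i, Real.negMulLog (hA.eigenvalues i) := by
  rw [eta, dif_pos hA, ← Finset.sum_neg_distrib]
  simp [Real.negMulLog]

lemma trace_conj_unitary {n : ℕ} (A V : Matrix (Fin n) (Fin n) ℂ)
    (hV2 : V * star V = 1) : (star V * A * V).trace = A.trace := by
  rw [Matrix.trace_mul_cycle, hV2, one_mul]

/-- Majorization: the diagonal entries of a PSD matrix in any orthonormal basis majorize
its eigenvalues, so any concave function sums up larger on the diagonal. -/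
lemma maj {n : ℕ} {A : Matrix (Fin n) (Fin n) ℂ} (hA : A.PosSemidef)
    (V : Matrix (Fin n) (Fin n) ℂ) (hV1 : star V * V = 1) (hV2 : V * star V = 1)
    {f : ℝ → ℝ} (hf : ConcaveOn ℝ (Set.Ici 0) f) :
    ∑ j, f (hA.1.eigenvalues j) ≤ ∑ k, f (((star V * A * V) k k).re) := by
  classical
  set W : Matrix (Fin n) (Fin n) ℂ := (hA.1.eigenvectorUnitary : Matrix (Fin n) (Fin n) ℂ) with hW
  set M : Matrix (Fin n) (Fin n) ℂ := star V * W with hM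
  have hW1 : star W * W = 1 := Unitary.coe_star_mul_self _
  have hW2 : W * star W = 1 := Unitary.coe_mul_star_self _
  have hMs : star M = star W * V := by rw [hM, Matrix.star_mul, star_star]
  have hM1 : star M * M = 1 := by
    rw [hMs, hM, mul_assoc, ← mul_assoc V, hV2, one_mul, hW1]
  have hM2 : M * star M = 1 := by
    rw [hMs, hM, mul_assoc, ← mul_assoc W, hW2, one_mul, hV1]
  set α := hA.1.eigenvalues with hα
  have hdecomp : star V * A * V = M * diagonal (RCLike.ofReal ∘ α) * star M := by
    conv_lhs => rw [hA.1.spectral_theorem, Unitary.conjStarAlgAut_apply]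
    rw [hMs, hM]
    simp only [mul_assoc]
    rfl
  set B : Fin n → Fin n → ℝ := fun k j => Complex.normSq (M k j) with hB
  have hBnn : ∀ k j, 0 ≤ B k j := fun k j => Complex.normSq_nonneg _
  have hrow : ∀ k, ∑ j, B k j = 1 := by
    intro k
    have := congrArg (fun N => (N k k).re) hM2
    simpa [mul_apply, conjTranspose_apply, Complex.mul_conj, one_apply,
      Complex.re_sum] using this
  have hcol : ∀ j, ∑ k, B k j = 1 := by
    intro j
    have := congrArg (fun N => (N j j).re) hM1
    simpa [mul_apply, conjTranspose_apply, Complex.mul_conj, mul_comm, one_apply,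
      Complex.re_sum] using this
  have hdiag : ∀ k, ((star V * A * V) k k).re = ∑ j, B k j * α j := by
    intro k
    rw [hdecomp, mul_apply]
    simp only [Matrix.mul_diagonal, Function.comp_apply, Matrix.star_apply]
    rw [Complex.re_sum]
    congr 1; ext j
    simp only [RCLike.star_def, Complex.mul_re, Complex.mul_im, Complex.conj_re,
      Complex.conj_im, Complex.normSq_apply, hB]
    simp only [show ∀ a : ℝ, ((RCLike.ofReal a : ℂ)).re = a from fun a => by simp,
      show ∀ a : ℝ, ((RCLike.ofReal a : ℂ)).im = 0 from fun a => by simp]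
    ring
  have hnn : ∀ j, α j ∈ Set.Ici (0:ℝ) := fun j => hA.eigenvalues_nonneg j
  calc ∑ j, f (α j) = ∑ j, (∑ k, B k j) • f (α j) := by
        simp [hcol]
    _ = ∑ k, ∑ j, B k j • f (α j) := by
        rw [Finset.sum_comm]
        simp [smul_eq_mul, Finset.sum_mul]
    _ ≤ ∑ k, f (∑ j, B k j • α j) := by
        refine Finset.sum_le_sum fun k _ => ?_
        exact hf.le_map_sum (fun j _ => hBnn k j) (hrow k) (fun j _ => hnn j)
    _ = ∑ k, f (((star V * A * V) k k).re) := by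
        refine Finset.sum_congr rfl fun k _ => ?_
        rw [hdiag k]
        simp [smul_eq_mul]

lemma linear_concave (c : ℝ) : ConcaveOn ℝ (Set.Ici (0:ℝ)) (fun x : ℝ => x * c) := by
  refine ⟨convex_Ici 0, fun x _ y _ p q hp hq hpq => ?_⟩
  simp only [smul_eq_mul]
  exact le_of_eq (by ring)

lemma f_concave (c : ℝ) :
    ConcaveOn ℝ (Set.Ici (0:ℝ)) (fun x : ℝ => Real.negMulLog x + x * Real.log c) :=
  Real.concaveOn_negMulLog.add (linear_concave _)

/-- Concavity of `A ↦ η(A) + tr A · ln tr A` on the PSD cone. -/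
lemma gg_concave {n : ℕ} {A B : Matrix (Fin n) (Fin n) ℂ}
    (hA : A.PosSemidef) (hB : B.PosSemidef) {t : ℝ} (ht0 : 0 ≤ t) (ht1 : t ≤ 1) :
    t * (eta A + A.trace.re * Real.log A.trace.re)
      + (1 - t) * (eta B + B.trace.re * Real.log B.trace.re)
    ≤ eta (t • A + (1 - t) • B)
      + (t • A + (1 - t) • B).trace.re * Real.log (t • A + (1 - t) • B).trace.re := by
  classical
  have ht1' : (0:ℝ) ≤ 1 - t := by linarith
  set C : Matrix (Fin n) (Fin n) ℂ := t • A + (1 - t) • B with hCdef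
  have hC : C.PosSemidef := (psd_real_smul hA ht0).add (psd_real_smul hB ht1')
  set V : Matrix (Fin n) (Fin n) ℂ := (hC.1.eigenvectorUnitary : Matrix (Fin n) (Fin n) ℂ)
    with hV
  have hV1 : star V * V = 1 := Unitary.coe_star_mul_self _
  have hV2 : V * star V = 1 := Unitary.coe_mul_star_self _
  set lam := hC.1.eigenvalues with hlamdef
  have hdiagC : star V * C * V = diagonal (RCLike.ofReal ∘ lam) :=
    by have := hC.1.conjStarAlgAut_star_eigenvectorUnitary
       rw [Unitary.conjStarAlgAut_star_apply] at this; exact this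
  set a : Fin n → ℝ := fun k => ((star V * A * V) k k).re with ha
  set b : Fin n → ℝ := fun k => ((star V * B * V) k k).re with hb
  have hlin : star V * C * V = t • (star V * A * V) + (1 - t) • (star V * B * V) := by
    rw [hCdef]
    rw [Matrix.mul_add, Matrix.add_mul, Matrix.mul_smul, Matrix.smul_mul,
      Matrix.mul_smul, Matrix.smul_mul]
  have hlam : ∀ k, lam k = t * a k + (1 - t) * b k := by
    intro k
    have h := congrArg (fun N => (N k k).re) (hdiagC.symm.trans hlin)
    simpa [diagonal_apply_eq, Complex.add_re, Complex.smul_re, ha, hb] using h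
  have hApsd : (star V * A * V).PosSemidef := by
    rw [Matrix.star_eq_conjTranspose]
    exact hA.conjTranspose_mul_mul_same V
  have hBpsd : (star V * B * V).PosSemidef := by
    rw [Matrix.star_eq_conjTranspose]
    exact hB.conjTranspose_mul_mul_same V
  have hank : ∀ k, 0 ≤ a k := fun k => psd_diag_re_nonneg hApsd k
  have hbnk : ∀ k, 0 ≤ b k := fun k => psd_diag_re_nonneg hBpsd k
  have hTA : A.trace.re = ∑ k, a k := by
    rw [← trace_conj_unitary A V hV2, Matrix.trace, Complex.re_sum]
    rfl
  have hTB : B.trace.re = ∑ k, b k := by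
    rw [← trace_conj_unitary B V hV2, Matrix.trace, Complex.re_sum]
    rfl
  have haT : ∀ k, a k ≤ A.trace.re := by
    intro k
    rw [hTA]
    exact Finset.single_le_sum (fun j _ => hank j) (Finset.mem_univ k)
  have hbT : ∀ k, b k ≤ B.trace.re := by
    intro k
    rw [hTB]
    exact Finset.single_le_sum (fun j _ => hbnk j) (Finset.mem_univ k)
  have hTC : C.trace.re = t * A.trace.re + (1 - t) * B.trace.re := by
    rw [hCdef, Matrix.trace_add, Matrix.trace_smul, Matrix.trace_smul]
    simp [Complex.add_re, Complex.smul_re]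
  -- pointwise inequality
  have key : ∀ k,
      t * (Real.negMulLog (a k) + a k * Real.log A.trace.re)
        + (1 - t) * (Real.negMulLog (b k) + b k * Real.log B.trace.re)
      ≤ Real.negMulLog (lam k) + lam k * Real.log C.trace.re := by
    intro k
    rw [hlam k, hTC]
    exact psi_concave2 ht0 ht1 (hank k) (haT k) (hbnk k) (hbT k)
  -- sum of RHS equals gg C
  have hsumC : ∑ k, (Real.negMulLog (lam k) + lam k * Real.log C.trace.re)
      = eta C + C.trace.re * Real.log C.trace.re := by
    rw [Finset.sum_add_distrib, ← Finset.sum_mul, eta_eq hC.1,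
      ← trace_re_eq_sum_eigenvalues hC.1]
  -- majorization
  have hmajA : eta A + A.trace.re * Real.log A.trace.re
      ≤ ∑ k, (Real.negMulLog (a k) + a k * Real.log A.trace.re) := by
    have h := maj hA V hV1 hV2 (f_concave A.trace.re)
    calc eta A + A.trace.re * Real.log A.trace.re
        = ∑ j, (Real.negMulLog (hA.1.eigenvalues j)
            + hA.1.eigenvalues j * Real.log A.trace.re) := by
          rw [Finset.sum_add_distrib, ← Finset.sum_mul, eta_eq hA.1,
            ← trace_re_eq_sum_eigenvalues hA.1]
      _ ≤ _ := h
  have hmajB : eta B + B.trace.re * Real.log B.trace.re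
      ≤ ∑ k, (Real.negMulLog (b k) + b k * Real.log B.trace.re) := by
    have h := maj hB V hV1 hV2 (f_concave B.trace.re)
    calc eta B + B.trace.re * Real.log B.trace.re
        = ∑ j, (Real.negMulLog (hB.1.eigenvalues j)
            + hB.1.eigenvalues j * Real.log B.trace.re) := by
          rw [Finset.sum_add_distrib, ← Finset.sum_mul, eta_eq hB.1,
            ← trace_re_eq_sum_eigenvalues hB.1]
      _ ≤ _ := h
  calc t * (eta A + A.trace.re * Real.log A.trace.re)
        + (1 - t) * (eta B + B.trace.re * Real.log B.trace.re)
      ≤ t * ∑ k, (Real.negMulLog (a k) + a k * Real.log A.trace.re)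
        + (1 - t) * ∑ k, (Real.negMulLog (b k) + b k * Real.log B.trace.re) := by
        have := mul_le_mul_of_nonneg_left hmajA ht0
        have := mul_le_mul_of_nonneg_left hmajB ht1'
        linarith
    _ = ∑ k, (t * (Real.negMulLog (a k) + a k * Real.log A.trace.re)
        + (1 - t) * (Real.negMulLog (b k) + b k * Real.log B.trace.re)) := by
        symm
        rw [Finset.sum_add_distrib, ← Finset.mul_sum, ← Finset.mul_sum]
    _ ≤ ∑ k, (Real.negMulLog (lam k) + lam k * Real.log C.trace.re) :=
        Finset.sum_le_sum fun k _ => key k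
    _ = _ := hsumC

lemma eigProj_hermitian {n : ℕ} {σ : Matrix (Fin n) (Fin n) ℂ} (h : σ.IsHermitian) (c : ℝ) :
    (eigProj h c)ᴴ = eigProj h c := by
  rw [eigProj]
  rw [conjTranspose_mul, conjTranspose_mul, diagonal_conjTranspose]
  rw [← Matrix.star_eq_conjTranspose, ← Matrix.star_eq_conjTranspose, star_star]
  have : star (fun i => if h.eigenvalues i = c then (1:ℂ) else 0)
      = fun i => if h.eigenvalues i = c then (1:ℂ) else 0 := by
    funext i
    simp [Pi.star_apply, apply_ite star]
  rw [this, mul_assoc]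

/-- trace of `Q_c σ` is nonnegative for PSD `σ`. -/
lemma wt_nonneg {n : ℕ} {σ : Matrix (Fin n) (Fin n) ℂ} (hσ : σ.PosSemidef) (c : ℝ) :
    0 ≤ (eigProj hσ.1 c * σ).trace.re := by
  classical
  set U : Matrix (Fin n) (Fin n) ℂ := (hσ.1.eigenvectorUnitary : Matrix (Fin n) (Fin n) ℂ)
  have hU1 : star U * U = 1 := Unitary.coe_star_mul_self _
  set dc : Fin n → ℂ := fun i => if hσ.1.eigenvalues i = c then (1:ℂ) else 0
  have e0 : eigProj hσ.1 c * σ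
      = eigProj hσ.1 c * (U * diagonal (RCLike.ofReal ∘ hσ.1.eigenvalues) * star U) := by
    have hs := hσ.1.spectral_theorem
    rw [Unitary.conjStarAlgAut_apply] at hs
    rw [← hs]
  have e1 : eigProj hσ.1 c * σ
      = U * (diagonal dc * diagonal (RCLike.ofReal ∘ hσ.1.eigenvalues)) * star U := by
    rw [e0, eigProj]
    simp only [mul_assoc]
    rw [← mul_assoc (star U) U, hU1, one_mul]
  rw [e1, Matrix.trace_mul_cycle, ← mul_assoc, hU1, one_mul,
    diagonal_mul_diagonal, trace_diagonal, Complex.re_sum]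
  refine Finset.sum_nonneg fun i _ => ?_
  by_cases h : hσ.1.eigenvalues i = c
  · simp only [dc, h, if_true, one_mul, Function.comp_apply]
    have := hσ.eigenvalues_nonneg i
    rw [h] at this
    simpa using this
  · simp [dc, h]

/-- Concavity of `condF` in its first argument for a Hermitian `Q`. -/
lemma condF_concave {n : ℕ} {Q ρ₁ ρ₂ : Matrix (Fin n) (Fin n) ℂ} (hQ : Qᴴ = Q)
    (h₁ : ρ₁.PosSemidef) (h₂ : ρ₂.PosSemidef) {t : ℝ} (ht0 : 0 ≤ t) (ht1 : t ≤ 1) :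
    t * condF ρ₁ Q + (1 - t) * condF ρ₂ Q ≤ condF (t • ρ₁ + (1 - t) • ρ₂) Q := by
  have e : Q * (t • ρ₁ + (1 - t) • ρ₂) * Q = t • (Q * ρ₁ * Q) + (1 - t) • (Q * ρ₂ * Q) := by
    rw [Matrix.mul_add, Matrix.add_mul, Matrix.mul_smul, Matrix.smul_mul,
      Matrix.mul_smul, Matrix.smul_mul]
  have hP1 : (Q * ρ₁ * Q).PosSemidef := by
    have := h₁.mul_mul_conjTranspose_same Q
    rwa [hQ] at this
  have hP2 : (Q * ρ₂ * Q).PosSemidef := by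
    have := h₂.mul_mul_conjTranspose_same Q
    rwa [hQ] at this
  rw [condF, condF, condF, e]
  exact gg_concave hP1 hP2 ht0 ht1

/-- For every fixed density matrix `σ`, the map `ρ ↦ S(ρ|σ)` is concave
on density matrices. -/
theorem condS_concave_left {n : ℕ} (hn : 1 ≤ n)
    (σ : Matrix (Fin n) (Fin n) ℂ) (hσ : σ.PosSemidef) (hσ1 : σ.trace = 1)
    (ρ₁ ρ₂ : Matrix (Fin n) (Fin n) ℂ)
    (h₁ : ρ₁.PosSemidef) (h₁1 : ρ₁.trace = 1)
    (h₂ : ρ₂.PosSemidef) (h₂1 : ρ₂.trace = 1)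
    (t : ℝ) (ht0 : 0 ≤ t) (ht1 : t ≤ 1) :
    t * condS ρ₁ σ + (1 - t) * condS ρ₂ σ ≤ condS (t • ρ₁ + (1 - t) • ρ₂) σ := by
  classical
  have hH : σ.IsHermitian := hσ.1
  rw [condS, condS, condS, dif_pos hH, dif_pos hH, dif_pos hH]
  rw [Finset.mul_sum, Finset.mul_sum, ← Finset.sum_add_distrib]
  refine Finset.sum_le_sum fun c _ => ?_
  have hw : 0 ≤ (eigProj hH c * σ).trace.re := wt_nonneg hσ c
  have hF := condF_concave (eigProj_hermitian hH c) h₁ h₂ ht0 ht1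
  calc t * ((eigProj hH c * σ).trace.re * condF ρ₁ (eigProj hH c))
        + (1 - t) * ((eigProj hH c * σ).trace.re * condF ρ₂ (eigProj hH c))
      = (eigProj hH c * σ).trace.re
          * (t * condF ρ₁ (eigProj hH c) + (1 - t) * condF ρ₂ (eigProj hH c)) := by ring
    _ ≤ (eigProj hH c * σ).trace.re * condF (t • ρ₁ + (1 - t) • ρ₂) (eigProj hH c) :=
        mul_le_mul_of_nonneg_left hF hw
end

section
/- Let ρ be a positive definite density matrix on an n-dimensional complex Hilbert space with n ≥ 2, and let Q be an orthogonal projection with Q ≠ I. Then the strict inequality F(ρ,Q) < S(ρ) holds. -/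
open Matrix
open scoped ComplexOrder

section Aux
open Polynomial

set_option maxHeartbeats 1000000 in
set_option synthInstance.maxHeartbeats 400000 in
lemma my_charpoly_mul_comm {m : ℕ} (A B : Matrix (Fin m) (Fin m) ℂ) :
    (A * B).charpoly = (B * A).charpoly := by
  classical
  have hinj : Function.Injective (algebraMap ℂ[X] (RatFunc ℂ)) := RatFunc.algebraMap_injective ℂ
  apply hinj
  set φ : ℂ[X] →+* RatFunc ℂ := (algebraMap ℂ[X] (RatFunc ℂ) : ℂ[X] →+* RatFunc ℂ) with hφ
  set c : ℂ →+* RatFunc ℂ := φ.comp (Polynomial.C : ℂ →+* ℂ[X]) with hc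
  set x : RatFunc ℂ := φ X with hx
  have hx0 : x ≠ 0 := by
    simp only [hx]
    intro h
    have := hinj (a₁ := X) (a₂ := 0) (by simpa using h)
    exact Polynomial.X_ne_zero this
  have hchar : ∀ M : Matrix (Fin m) (Fin m) ℂ,
      φ M.charpoly = (Matrix.diagonal (fun _ : Fin m => x) - (M.map c)).det := by
    intro M
    rw [Matrix.charpoly, RingHom.map_det]
    congr 1
    ext i j
    by_cases h : i = j
    · subst h
      simp [Matrix.charmatrix_apply_eq, RingHom.mapMatrix_apply, Matrix.map_apply,
        Matrix.sub_apply, Matrix.diagonal_apply_eq, hc, hx]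
    · simp [Matrix.charmatrix_apply_ne _ _ _ h, RingHom.mapMatrix_apply, Matrix.map_apply,
        Matrix.sub_apply, Matrix.diagonal_apply_ne _ h, hc]
  rw [hchar, hchar]
  rw [show (A * B).map ⇑c = A.map c * B.map c from Matrix.map_mul,
      show (B * A).map ⇑c = B.map c * A.map c from Matrix.map_mul]
  set A' := A.map c
  set B' := B.map c
  set D : Matrix (Fin m) (Fin m) (RatFunc ℂ) := Matrix.diagonal (fun _ => x) with hD
  letI instD : Invertible D := ⟨Matrix.diagonal (fun _ => x⁻¹), by
      rw [hD, Matrix.diagonal_mul_diagonal]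
      simp [inv_mul_cancel₀ hx0], by
      rw [hD, Matrix.diagonal_mul_diagonal]
      simp [mul_inv_cancel₀ hx0]⟩
  have h1 : (Matrix.fromBlocks D A' B' 1).det = (D - A' * B').det :=
    Matrix.det_fromBlocks_one₂₂ D A' B'
  have h2 : (Matrix.fromBlocks D A' B' 1).det = (D - B' * A').det := by
    rw [Matrix.det_fromBlocks₁₁]
    have hinvD : (⅟D : Matrix (Fin m) (Fin m) (RatFunc ℂ)) = Matrix.diagonal (fun _ => x⁻¹) := rfl
    have hDdet : D.det = x ^ m := by simp [hD, Matrix.det_diagonal]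
    have hsmul : B' * ⅟D * A' = x⁻¹ • (B' * A') := by
      rw [hinvD]
      have hd1 : Matrix.diagonal (fun _ : Fin m => x⁻¹)
          = x⁻¹ • (1 : Matrix (Fin m) (Fin m) (RatFunc ℂ)) := by
        ext i j; by_cases h : i = j <;> simp [h, Matrix.one_apply]
      rw [hd1, Matrix.mul_smul, Matrix.mul_one, Matrix.smul_mul]
    rw [hsmul, hDdet]
    have hkey : (1 : Matrix (Fin m) (Fin m) (RatFunc ℂ)) - x⁻¹ • (B' * A') = x⁻¹ • (D - B' * A') := by
      rw [smul_sub, hD]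
      congr 1
      ext i j; by_cases h : i = j <;> simp [h, Matrix.one_apply, inv_mul_cancel₀ hx0]
    rw [hkey, Matrix.det_smul]
    rw [Fintype.card_fin, ← mul_assoc, ← mul_pow, mul_inv_cancel₀ hx0, one_pow, one_mul]
  rw [← h1, h2]

lemma my_charpoly_diagonal {m : ℕ} (d : Fin m → ℂ) :
    (Matrix.diagonal d).charpoly = ∏ i, (X - C (d i)) := by
  rw [Matrix.charpoly]
  have : (Matrix.diagonal d).charmatrix = Matrix.diagonal (fun i => X - C (d i)) := by
    ext i j
    by_cases h : i = j
    · subst h; simp [Matrix.charmatrix_apply_eq]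
    · simp [Matrix.charmatrix_apply_ne _ _ _ h, Matrix.diagonal_apply_ne _ h]
  rw [this, Matrix.det_diagonal]

lemma my_charpoly_hermitian {m : ℕ} {H : Matrix (Fin m) (Fin m) ℂ} (hH : H.IsHermitian) :
    H.charpoly = ∏ i, (X - C (hH.eigenvalues i : ℂ)) := by
  have h1 : H.charpoly = ((hH.eigenvectorUnitary : Matrix (Fin m) (Fin m) ℂ) *
      Matrix.diagonal (RCLike.ofReal ∘ hH.eigenvalues) *
      (star hH.eigenvectorUnitary : Matrix (Fin m) (Fin m) ℂ)).charpoly := by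
    conv_lhs => rw [hH.spectral_theorem, Unitary.conjStarAlgAut_apply]
  rw [h1, mul_assoc, my_charpoly_mul_comm, mul_assoc]
  rw [show ((star hH.eigenvectorUnitary : Matrix (Fin m) (Fin m) ℂ) *
      (hH.eigenvectorUnitary : Matrix (Fin m) (Fin m) ℂ)) = 1 from Unitary.coe_star_mul_self _,
    mul_one, my_charpoly_diagonal]
  rfl

lemma my_sum_eig_eq {m : ℕ} {P R : Matrix (Fin m) (Fin m) ℂ} (hP : P.IsHermitian)
    (hR : R.IsHermitian) (h : P.charpoly = R.charpoly) (g : ℝ → ℝ) :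
    ∑ i, g (hP.eigenvalues i) = ∑ i, g (hR.eigenvalues i) := by
  have key : ∀ (e : Fin m → ℝ), (∏ i, (X - C ((e i : ℝ) : ℂ))).roots
      = Finset.univ.val.map (fun i => ((e i : ℝ) : ℂ)) := by
    intro e
    rw [Finset.prod_eq_multiset_prod]
    rw [show (Finset.univ.val.map fun i => X - C ((e i : ℝ) : ℂ))
        = ((Finset.univ.val.map fun i => ((e i : ℝ) : ℂ)).map fun a => X - C a) by
      rw [Multiset.map_map]; rfl]
    exact Polynomial.roots_multiset_prod_X_sub_C _
  have hms : (Finset.univ.val.map fun i => ((hP.eigenvalues i : ℝ) : ℂ))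
      = (Finset.univ.val.map fun i => ((hR.eigenvalues i : ℝ) : ℂ)) := by
    rw [← key, ← key, ← my_charpoly_hermitian hP, ← my_charpoly_hermitian hR, h]
  have := congrArg (fun s : Multiset ℂ => (s.map fun z => g z.re).sum) hms
  simp only [Multiset.map_map, Function.comp] at this
  simpa [Finset.sum] using this

lemma my_trace_eq_sum_eigen {m : ℕ} {H : Matrix (Fin m) (Fin m) ℂ} (hH : H.IsHermitian) :
    H.trace = ∑ i, (hH.eigenvalues i : ℂ) := by
  conv_lhs => rw [hH.spectral_theorem, Unitary.conjStarAlgAut_apply]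
  rw [Matrix.trace_mul_cycle]
  rw [show ((star hH.eigenvectorUnitary : Matrix (Fin m) (Fin m) ℂ) *
      (hH.eigenvectorUnitary : Matrix (Fin m) (Fin m) ℂ)) = 1 from Unitary.coe_star_mul_self _,
    one_mul, Matrix.trace_diagonal]
  rfl

end Aux

lemma my_eta_eq {m : ℕ} {H : Matrix (Fin m) (Fin m) ℂ} (hH : H.IsHermitian) :
    eta H = -∑ i, hH.eigenvalues i * Real.log (hH.eigenvalues i) := dif_pos hH

/-- If `n ≥ 2`, `ρ` is a positive definite density matrix and `Q ≠ I` is an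
orthogonal projection, then `F(ρ,Q) < S(ρ)`. -/
theorem condF_lt_entropy {n : ℕ} (hn : 2 ≤ n)
    (ρ Q : Matrix (Fin n) (Fin n) ℂ)
    (hρ : ρ.PosDef) (hρ1 : ρ.trace = 1)
    (hQ : Qᴴ = Q) (hQ2 : Q * Q = Q) (hQne : Q ≠ 1) :
    condF ρ Q < eta ρ := by
  classical
  have hρH : ρ.IsHermitian := hρ.1
  obtain ⟨S, hSps', hSS'⟩ : ∃ S : Matrix (Fin n) (Fin n) ℂ, S.PosSemidef ∧ S * S = ρ := by
    open scoped MatrixOrder in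
    exact ⟨CFC.sqrt ρ, Matrix.nonneg_iff_posSemidef.mp (CFC.sqrt_nonneg ρ), CFC.sqrt_mul_sqrt_self ρ hρ.posSemidef.nonneg⟩
  have hSps : S.PosSemidef := hSps'
  have hSH : Sᴴ = S := hSps.1
  have hSS : S * S = ρ := hSS'
  set Z : Matrix (Fin n) (Fin n) ℂ := S * Q with hZdef
  have hZt : Zᴴ = Q * S := by rw [hZdef, conjTranspose_mul, hQ, hSH]
  have hAZ : Q * ρ * Q = Zᴴ * Z := by
    rw [hZt, hZdef, ← hSS]
    noncomm_ring
  set M : Matrix (Fin n) (Fin n) ℂ := Z * Zᴴ with hMdef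
  have hApsd : (Q * ρ * Q).PosSemidef := by
    rw [hAZ]; exact posSemidef_conjTranspose_mul_self Z
  have hMpsd : M.PosSemidef := posSemidef_self_mul_conjTranspose Z
  have hchar : (Q * ρ * Q).charpoly = M.charpoly := by
    rw [hAZ, hMdef]; exact my_charpoly_mul_comm _ _
  set a : Fin n → ℝ := hMpsd.1.eigenvalues with hadef
  set b : Fin n → ℝ := hρH.eigenvalues with hbdef
  have ha0 : ∀ i, 0 ≤ a i := hMpsd.eigenvalues_nonneg
  have hb0 : ∀ j, 0 < b j := hρ.eigenvalues_pos
  have hbsum : ∑ j, b j = 1 := by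
    have h1 := my_trace_eq_sum_eigen hρH
    rw [hρ1] at h1
    have := congrArg Complex.re h1.symm
    simpa using this
  have hb1 : ∀ j, b j < 1 := by
    intro j
    obtain ⟨k, hk⟩ := Fintype.exists_ne_of_one_lt_card (by simp; omega) j
    have hsub : b j + b k ≤ ∑ j, b j := by
      rw [← Finset.sum_pair (Ne.symm hk)]
      exact Finset.sum_le_sum_of_subset_of_nonneg (Finset.subset_univ _)
        (fun i _ _ => (hb0 i).le)
    rw [hbsum] at hsub
    nlinarith [hb0 k]
  -- unitaries
  set U : Matrix (Fin n) (Fin n) ℂ := (hMpsd.1.eigenvectorUnitary : Matrix (Fin n) (Fin n) ℂ) with hUdef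
  set V : Matrix (Fin n) (Fin n) ℂ := (hρH.eigenvectorUnitary : Matrix (Fin n) (Fin n) ℂ) with hVdef
  have hUU : star U * U = 1 := Unitary.coe_star_mul_self _
  have hUU' : U * star U = 1 := Unitary.coe_mul_star_self _
  have hVV : star V * V = 1 := Unitary.coe_star_mul_self _
  have hVV' : V * star V = 1 := Unitary.coe_mul_star_self _
  set W : Matrix (Fin n) (Fin n) ℂ := star U * V with hWdef
  have hWW' : star W * W = 1 := by
    rw [hWdef, StarMul.star_mul, star_star, mul_assoc, ← mul_assoc U, hUU', one_mul, hVV]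
  have hWW : W * star W = 1 := by
    rw [hWdef, StarMul.star_mul, star_star, mul_assoc, ← mul_assoc V, hVV', one_mul, hUU]
  set w : Fin n → Fin n → ℝ := fun i j => Complex.normSq (W i j) with hwdef
  have hw0 : ∀ i j, 0 ≤ w i j := fun i j => Complex.normSq_nonneg _
  have hrow : ∀ i, ∑ j, w i j = 1 := by
    intro i
    have h1 : (W * star W) i i = 1 := by rw [hWW]; simp
    rw [Matrix.mul_apply] at h1
    simp only [Matrix.star_apply, Complex.mul_conj] at h1
    have := congrArg Complex.re h1
    simpa [hwdef, Complex.normSq_apply] using this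
  have hcol : ∀ j, ∑ i, w i j = 1 := by
    intro j
    have h1 : (star W * W) j j = 1 := by rw [hWW']; simp
    rw [Matrix.mul_apply] at h1
    simp only [Matrix.star_apply, RCLike.star_def] at h1
    have := congrArg Complex.re h1
    simp only [Complex.re_sum] at this
    simpa [hwdef, mul_comm, Complex.mul_conj] using this
  set c : Fin n → ℝ := fun j => ∑ i, w i j * a i with hcdef
  -- diagonal entries
  have hVMV : star V * M * V = star W * Matrix.diagonal (RCLike.ofReal ∘ a) * W := by
    conv_lhs => rw [hMpsd.1.spectral_theorem, Unitary.conjStarAlgAut_apply]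
    rw [hWdef, StarMul.star_mul, star_star]
    simp only [← hUdef, ← mul_assoc]
    rfl
  have hcj : ∀ j, (star V * M * V) j j = ((c j : ℝ) : ℂ) := by
    intro j
    rw [hVMV, mul_assoc, Matrix.mul_apply]
    have hterm : ∀ k, (star W) j k * ((Matrix.diagonal (RCLike.ofReal ∘ a) : Matrix (Fin n) (Fin n) ℂ) * W) k j
        = ((w k j * a k : ℝ) : ℂ) := by
      intro k
      have hdk : ((Matrix.diagonal (RCLike.ofReal ∘ a) : Matrix (Fin n) (Fin n) ℂ) * W) k j = ((a k : ℝ) : ℂ) * W k j := by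
        rw [Matrix.mul_apply]
        simp [Matrix.diagonal_apply]
      rw [hdk, Matrix.star_apply]
      simp only [RCLike.star_def]
      rw [show (starRingEnd ℂ) (W k j) * ((a k : ℂ) * W k j)
          = (a k : ℂ) * ((starRingEnd ℂ) (W k j) * W k j) by ring]
      rw [mul_comm ((starRingEnd ℂ) (W k j)) (W k j), Complex.mul_conj]
      push_cast [hwdef]
      ring
    rw [Finset.sum_congr rfl (fun k _ => hterm k)]
    rw [hcdef]
    push_cast
    rfl
  have hbj : star V * ρ * V = Matrix.diagonal (RCLike.ofReal ∘ b) :=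
    by
    have := hρH.conjStarAlgAut_star_eigenvectorUnitary
    rwa [Unitary.conjStarAlgAut_apply, Unitary.coe_star, star_star] at this
  have hMSQS : M = S * Q * S := by
    rw [hMdef, hZt, hZdef]
    calc S * Q * (Q * S) = S * (Q * Q) * S := by noncomm_ring
    _ = S * Q * S := by rw [hQ2]
  set Y : Matrix (Fin n) (Fin n) ℂ := (1 - Q) * S with hYdef
  have hYt : Yᴴ = S * (1 - Q) := by
    rw [hYdef, conjTranspose_mul, conjTranspose_sub, conjTranspose_one, hQ, hSH]
  have hYY : Yᴴ * Y = ρ - M := by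
    rw [hYt, hYdef, hMSQS, ← hSS]
    have h11 : (1 - Q) * ((1 - Q) * S) = (1 - Q) * S - Q * ((1 - Q) * S) := by noncomm_ring
    calc S * (1 - Q) * ((1 - Q) * S) = S * ((1 - Q) * (1 - Q)) * S := by noncomm_ring
    _ = S * (1 - Q) * S := by
        congr 2
        calc (1 - Q) * (1 - Q) = 1 - Q - Q + Q * Q := by noncomm_ring
        _ = 1 - Q := by rw [hQ2]; abel
    _ = S * S - S * Q * S := by noncomm_ring
  have hdiff : ∀ j, ((b j : ℝ) : ℂ) - ((c j : ℝ) : ℂ)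
      = ∑ k, ((Complex.normSq ((Y * V) k j) : ℝ) : ℂ) := by
    intro j
    have h1 : star V * (ρ - M) * V = star V * ρ * V - star V * M * V := by noncomm_ring
    have h2 : star V * (ρ - M) * V = (Y * V)ᴴ * (Y * V) := by
      rw [← hYY, conjTranspose_mul Y V, Matrix.star_eq_conjTranspose]
      simp only [Matrix.mul_assoc]
    have h3 := congrArg (fun N : Matrix (Fin n) (Fin n) ℂ => N j j) (h1.symm.trans h2)
    simp only [Matrix.sub_apply] at h3
    rw [hbj, hcj] at h3
    simp only [Matrix.diagonal_apply_eq, Function.comp_apply] at h3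
    rw [show (RCLike.ofReal (b j) : ℂ) = ((b j : ℝ) : ℂ) from rfl] at h3
    rw [h3, Matrix.mul_apply]
    refine Finset.sum_congr rfl fun k _ => ?_
    rw [Matrix.conjTranspose_apply, RCLike.star_def, mul_comm, Complex.mul_conj]
  have hd0 : ∀ j, 0 ≤ ∑ k, Complex.normSq ((Y * V) k j) :=
    fun j => Finset.sum_nonneg fun k _ => Complex.normSq_nonneg _
  have hdiffR : ∀ j, b j - c j = ∑ k, Complex.normSq ((Y * V) k j) := by
    intro j
    have := congrArg Complex.re (hdiff j)
    simpa using this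
  have hcb : ∀ j, c j ≤ b j := by
    intro j
    have := hd0 j
    rw [← hdiffR j] at this
    linarith
  have hYVne : Y * V ≠ 0 := by
    intro h0
    have hY0 : Y = 0 := by
      have : Y * (V * star V) = 0 := by rw [← Matrix.mul_assoc, h0, Matrix.zero_mul]
      rwa [hVV', Matrix.mul_one] at this
    have hdetS : IsUnit S.det := by
      have hdetρ : ρ.det ≠ 0 := hρ.det_pos.ne'
      rw [← hSS, Matrix.det_mul] at hdetρ
      exact (IsUnit.mul_iff.mp (isUnit_iff_ne_zero.mpr hdetρ)).1
    have h1Q : (1 - Q : Matrix (Fin n) (Fin n) ℂ) = 0 := by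
      have h2 : (1 - Q) * (S * S⁻¹) = 0 := by
        rw [← Matrix.mul_assoc, ← hYdef, hY0, Matrix.zero_mul]
      rwa [Matrix.mul_nonsing_inv S hdetS, Matrix.mul_one] at h2
    exact hQne (sub_eq_zero.mp h1Q).symm
  obtain ⟨j0, hj0⟩ : ∃ j, c j < b j := by
    by_contra hcon
    push_neg at hcon
    have hall : ∀ j, c j = b j := fun j => le_antisymm (hcb j) (hcon j)
    have : ∀ j, ∑ k, Complex.normSq ((Y * V) k j) = 0 := by
      intro j
      rw [← hdiffR j, hall j, sub_self]
    have hz : ∀ k j, (Y * V) k j = 0 := by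
      intro k j
      have hsum := this j
      have := (Finset.sum_eq_zero_iff_of_nonneg
        (fun k _ => Complex.normSq_nonneg ((Y * V) k j))).mp hsum k (Finset.mem_univ k)
      exact Complex.normSq_eq_zero.mp this
    exact hYVne (by ext k j; exact hz k j)
  have hbne : ∀ j, b j ≠ 0 := fun j => (hb0 j).ne'
  set t : ℝ := ∑ i, a i with htdef
  -- Jensen's inequality
  have jensen : t * Real.log t
      ≤ (∑ i, a i * Real.log (a i)) - ∑ j, c j * Real.log (b j) := by
    have h := Real.convexOn_mul_log.map_sum_le (t := (Finset.univ : Finset (Fin n × Fin n)))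
      (w := fun p => w p.1 p.2 * b p.2) (p := fun p => a p.1 / b p.2)
      (fun p _ => mul_nonneg (hw0 _ _) (hb0 _).le)
      (by
        rw [Fintype.sum_prod_type]
        rw [Finset.sum_comm]
        have : ∀ j, ∑ i, w i j * b j = b j := by
          intro j
          rw [← Finset.sum_mul, hcol j, one_mul]
        rw [Finset.sum_congr rfl fun j _ => this j, hbsum])
      (fun p _ => Set.mem_Ici.mpr (div_nonneg (ha0 _) (hb0 _).le))
    have hL : ∑ p : Fin n × Fin n, (w p.1 p.2 * b p.2) • (a p.1 / b p.2) = t := by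
      rw [Fintype.sum_prod_type]
      have hterm : ∀ i j, (w i j * b j) • (a i / b j) = w i j * a i := by
        intro i j
        rw [smul_eq_mul]
        calc (w i j * b j) * (a i / b j) = w i j * (a i / b j * b j) := by ring
        _ = w i j * a i := by rw [div_mul_cancel₀ _ (hbne j)]
      rw [Finset.sum_congr rfl fun i _ => Finset.sum_congr rfl fun j _ => hterm i j]
      rw [htdef]
      refine Finset.sum_congr rfl fun i _ => ?_
      rw [← Finset.sum_mul, hrow i, one_mul]
    have hR : ∑ p : Fin n × Fin n, (w p.1 p.2 * b p.2) • ((a p.1 / b p.2) * Real.log (a p.1 / b p.2))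
        = (∑ i, a i * Real.log (a i)) - ∑ j, c j * Real.log (b j) := by
      have hterm : ∀ i j, (w i j * b j) • ((a i / b j) * Real.log (a i / b j))
          = w i j * (a i * Real.log (a i)) - w i j * (a i * Real.log (b j)) := by
        intro i j
        rw [smul_eq_mul]
        by_cases ha : a i = 0
        · simp [ha]
        · rw [Real.log_div ha (hbne j)]
          calc (w i j * b j) * ((a i / b j) * (Real.log (a i) - Real.log (b j)))
              = (a i / b j * b j) * (w i j * (Real.log (a i) - Real.log (b j))) := by ring
          _ = a i * (w i j * (Real.log (a i) - Real.log (b j))) := by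
                rw [div_mul_cancel₀ _ (hbne j)]
          _ = w i j * (a i * Real.log (a i)) - w i j * (a i * Real.log (b j)) := by ring
      rw [Fintype.sum_prod_type]
      rw [Finset.sum_congr rfl fun i _ => Finset.sum_congr rfl fun j _ => hterm i j]
      rw [Finset.sum_congr rfl fun i (_ : i ∈ Finset.univ) => Finset.sum_sub_distrib
        (f := fun j => w i j * (a i * Real.log (a i))) (g := fun j => w i j * (a i * Real.log (b j)))]
      rw [Finset.sum_sub_distrib]
      congr 1
      · refine Finset.sum_congr rfl fun i _ => ?_
        rw [← Finset.sum_mul, hrow i, one_mul]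
      · rw [Finset.sum_comm]
        refine Finset.sum_congr rfl fun j _ => ?_
        rw [hcdef]
        simp only
        rw [Finset.sum_mul]
        refine Finset.sum_congr rfl fun i _ => ?_
        ring
    rw [hL, hR] at h
    exact h
  -- rewrite condF and eta
  have hetaA : eta (Q * ρ * Q) = -∑ i, a i * Real.log (a i) := by
    rw [my_eta_eq hApsd.1]
    exact congrArg Neg.neg (my_sum_eig_eq hApsd.1 hMpsd.1 hchar (fun x => x * Real.log x))
  have htr : (Q * ρ * Q).trace.re = t := by
    have h1 : (Q * ρ * Q).trace = M.trace := by
      rw [hAZ, hMdef, Matrix.trace_mul_comm]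
    have h2 := my_trace_eq_sum_eigen hMpsd.1
    rw [h2] at h1
    rw [h1, htdef]
    simp [hadef]
  have hetaρ : eta ρ = -∑ j, b j * Real.log (b j) := my_eta_eq hρH
  have hsumlt : ∑ j, b j * Real.log (b j) < ∑ j, c j * Real.log (b j) := by
    refine Finset.sum_lt_sum (fun j _ => ?_) ⟨j0, Finset.mem_univ j0, ?_⟩
    · exact mul_le_mul_of_nonpos_right (hcb j) (Real.log_nonpos (hb0 j).le (hb1 j).le)
    · exact mul_lt_mul_of_neg_right hj0 (Real.log_neg (hb0 j0) (hb1 j0))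
  have hcondF : condF ρ Q = -(∑ i, a i * Real.log (a i)) + t * Real.log t := by
    unfold condF
    rw [hetaA, htr]
  rw [hcondF, hetaρ]
  have := jensen
  linarith
end

section
/- Let ρ be a density matrix. Then S(ρ|ρ) = 0 if and only if all non-zero eigenvalues of ρ are non-degenerate, i.e., every eigenspace of ρ corresponding to a positive eigenvalue is one-dimensional. -/
open Matrix
open scoped ComplexOrder

section aux
variable {n : ℕ}

lemma conj_mul_conj {U A B : Matrix (Fin n) (Fin n) ℂ} (hU : star U * U = 1) :
    (U * A * star U) * (U * B * star U) = U * (A * B) * star U := by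
  rw [show (U * A * star U) * (U * B * star U)
      = U * (A * ((star U * U) * B)) * star U by noncomm_ring, hU, one_mul]

lemma conj_cancel {U A B : Matrix (Fin n) (Fin n) ℂ} (h1 : star U * U = 1)
    (hAB : U * A * star U = U * B * star U) : A = B := by
  have h2 := congrArg (fun M => star U * M * U) hAB
  rwa [show star U * (U*A*star U) * U = (star U * U) * A * (star U * U) by noncomm_ring,
    show star U * (U*B*star U) * U = (star U * U) * B * (star U * U) by noncomm_ring,
    h1, one_mul, mul_one, one_mul, mul_one] at h2

lemma trace_conj_eq {U X : Matrix (Fin n) (Fin n) ℂ} (hU : star U * U = 1) :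
    (U * X * star U).trace = X.trace := by
  rw [trace_mul_cycle, hU, one_mul]

lemma conj_isHermitian {U D : Matrix (Fin n) (Fin n) ℂ} (hD : D.IsHermitian) :
    (U * D * star U).IsHermitian := by
  have : (U * D * star U)ᴴ = U * D * star U := by
    rw [conjTranspose_mul, conjTranspose_mul, hD.eq, ← star_eq_conjTranspose,
      ← star_eq_conjTranspose, star_star, mul_assoc]
  exact this

lemma trace_eq_sum_eig {A : Matrix (Fin n) (Fin n) ℂ} (hA : A.IsHermitian) :
    A.trace = ((∑ i, hA.eigenvalues i : ℝ) : ℂ) := by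
  have h2 : (hA.eigenvectorUnitary : Matrix (Fin n) (Fin n) ℂ) *
      star (hA.eigenvectorUnitary : Matrix (Fin n) (Fin n) ℂ) = 1 :=
    Unitary.coe_mul_star_self hA.eigenvectorUnitary
  calc A.trace = (star (hA.eigenvectorUnitary : Matrix (Fin n) (Fin n) ℂ) * A *
        (hA.eigenvectorUnitary : Matrix (Fin n) (Fin n) ℂ)).trace := by
        rw [trace_mul_cycle, h2, one_mul]
    _ = ((∑ i, hA.eigenvalues i : ℝ) : ℂ) := by
        rw [(by have := hA.conjStarAlgAut_star_eigenvectorUnitary; rwa [Unitary.conjStarAlgAut_star_apply] at this : star (hA.eigenvectorUnitary : Matrix (Fin n) (Fin n) ℂ) * A * (hA.eigenvectorUnitary : Matrix (Fin n) (Fin n) ℂ) = diagonal (RCLike.ofReal ∘ hA.eigenvalues)), trace_diagonal]; push_cast; rfl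

variable {ρ : Matrix (Fin n) (Fin n) ℂ} (h : ρ.IsHermitian) (c : ℝ)

lemma star_mul_self_eigU : star (h.eigenvectorUnitary : Matrix (Fin n) (Fin n) ℂ) *
    (h.eigenvectorUnitary : Matrix (Fin n) (Fin n) ℂ) = 1 :=
  Unitary.coe_star_mul_self h.eigenvectorUnitary

/-- number of eigenvalues equal to `c` -/
noncomputable def eigMult : ℕ := (Finset.univ.filter (fun i => h.eigenvalues i = c)).card

lemma eigProj_mul_self : eigProj h c * eigProj h c = eigProj h c := by
  rw [eigProj, conj_mul_conj (star_mul_self_eigU h), diagonal_mul_diagonal]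
  have : (fun i => (if h.eigenvalues i = c then (1:ℂ) else 0) *
      if h.eigenvalues i = c then (1:ℂ) else 0)
      = fun i => if h.eigenvalues i = c then (1:ℂ) else 0 := by
    funext i; split <;> simp
  rw [this]

lemma eigProj_isHermitian : (eigProj h c).IsHermitian := by
  apply conj_isHermitian
  have : (star fun i => if h.eigenvalues i = c then (1:ℂ) else 0)
      = fun i => if h.eigenvalues i = c then (1:ℂ) else 0 := by
    funext i; simp [Pi.star_apply, apply_ite (star : ℂ → ℂ)]
  rw [IsHermitian, diagonal_conjTranspose, this]

lemma eigProj_mul_rho : eigProj h c * ρ =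
    (h.eigenvectorUnitary : Matrix (Fin n) (Fin n) ℂ) *
      (Matrix.diagonal (fun i => if h.eigenvalues i = c then (c : ℂ) else 0)) *
      star (h.eigenvectorUnitary : Matrix (Fin n) (Fin n) ℂ) := by
  have h2 : (h.eigenvectorUnitary : Matrix (Fin n) (Fin n) ℂ) *
      star (h.eigenvectorUnitary : Matrix (Fin n) (Fin n) ℂ) = 1 :=
    Unitary.coe_mul_star_self h.eigenvectorUnitary
  have step : eigProj h c * ρ = (h.eigenvectorUnitary : Matrix (Fin n) (Fin n) ℂ) *
      ((Matrix.diagonal (fun i => if h.eigenvalues i = c then (1 : ℂ) else 0)) *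
        (star (h.eigenvectorUnitary : Matrix (Fin n) (Fin n) ℂ) * ρ *
          (h.eigenvectorUnitary : Matrix (Fin n) (Fin n) ℂ))) *
      star (h.eigenvectorUnitary : Matrix (Fin n) (Fin n) ℂ) := by
    rw [eigProj]
    calc (h.eigenvectorUnitary : Matrix (Fin n) (Fin n) ℂ) *
        (Matrix.diagonal (fun i => if h.eigenvalues i = c then (1 : ℂ) else 0)) *
        star (h.eigenvectorUnitary : Matrix (Fin n) (Fin n) ℂ) * ρ
        = (h.eigenvectorUnitary : Matrix (Fin n) (Fin n) ℂ) *
          (Matrix.diagonal (fun i => if h.eigenvalues i = c then (1 : ℂ) else 0)) *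
          star (h.eigenvectorUnitary : Matrix (Fin n) (Fin n) ℂ) * ρ *
          ((h.eigenvectorUnitary : Matrix (Fin n) (Fin n) ℂ) *
            star (h.eigenvectorUnitary : Matrix (Fin n) (Fin n) ℂ)) := by rw [h2, mul_one]
      _ = _ := by noncomm_ring
  rw [step, (by have := h.conjStarAlgAut_star_eigenvectorUnitary; rwa [Unitary.conjStarAlgAut_star_apply] at this : star (h.eigenvectorUnitary : Matrix (Fin n) (Fin n) ℂ) * ρ * (h.eigenvectorUnitary : Matrix (Fin n) (Fin n) ℂ) = diagonal (RCLike.ofReal ∘ h.eigenvalues)), diagonal_mul_diagonal]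
  have : (fun i => (if h.eigenvalues i = c then (1:ℂ) else 0) *
        (RCLike.ofReal ∘ h.eigenvalues) i)
      = fun i => if h.eigenvalues i = c then (c:ℂ) else 0 := by
    funext i
    by_cases hi : h.eigenvalues i = c <;> simp [hi, Function.comp]
  rw [this]

lemma eigProj_mul_rho_mul_eigProj :
    eigProj h c * ρ * eigProj h c = (c : ℂ) • eigProj h c := by
  rw [eigProj_mul_rho]
  rw [show (c : ℂ) • eigProj h c = (h.eigenvectorUnitary : Matrix (Fin n) (Fin n) ℂ) *
      ((c:ℂ) • Matrix.diagonal (fun i => if h.eigenvalues i = c then (1 : ℂ) else 0)) *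
      star (h.eigenvectorUnitary : Matrix (Fin n) (Fin n) ℂ) by
    rw [eigProj, mul_smul_comm, smul_mul_assoc]]
  rw [eigProj, conj_mul_conj (star_mul_self_eigU h), diagonal_mul_diagonal, ← diagonal_smul]
  have : (fun i => (if h.eigenvalues i = c then (c:ℂ) else 0) *
        if h.eigenvalues i = c then (1:ℂ) else 0)
      = (c:ℂ) • fun i => if h.eigenvalues i = c then (1:ℂ) else 0 := by
    funext i
    by_cases hi : h.eigenvalues i = c <;> simp [hi]
  rw [this]

lemma trace_eigProj : (eigProj h c).trace = (eigMult h c : ℂ) := by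
  rw [eigProj, trace_conj_eq (star_mul_self_eigU h), trace_diagonal]
  simp [eigMult, Finset.sum_boole]

lemma trace_eigProj_mul_rho :
    (eigProj h c * ρ).trace = ((c * eigMult h c : ℝ) : ℂ) := by
  rw [eigProj_mul_rho, trace_conj_eq (star_mul_self_eigU h), trace_diagonal,
    Finset.sum_ite, Finset.sum_const, Finset.sum_const_zero, add_zero]
  rw [eigMult]
  push_cast
  ring

lemma eig_of_sq {A : Matrix (Fin n) (Fin n) ℂ} (hA : A.IsHermitian) {c : ℝ}
    (hsq : A * A = (c:ℂ) • A) (i : Fin n) :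
    hA.eigenvalues i = 0 ∨ hA.eigenvalues i = c := by
  have hV := star_mul_self_eigU hA
  have e1 : (hA.eigenvectorUnitary : Matrix (Fin n) (Fin n) ℂ) *
      (Matrix.diagonal (RCLike.ofReal ∘ hA.eigenvalues) *
        Matrix.diagonal (RCLike.ofReal ∘ hA.eigenvalues)) *
      star (hA.eigenvectorUnitary : Matrix (Fin n) (Fin n) ℂ) = (c:ℂ) • A := by
    rw [← conj_mul_conj hV, ← (show A = (hA.eigenvectorUnitary : Matrix (Fin n) (Fin n) ℂ) * Matrix.diagonal (RCLike.ofReal ∘ hA.eigenvalues) * star (hA.eigenvectorUnitary : Matrix (Fin n) (Fin n) ℂ) from hA.spectral_theorem), hsq]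
  have e2 : (hA.eigenvectorUnitary : Matrix (Fin n) (Fin n) ℂ) *
      ((c:ℂ) • Matrix.diagonal (RCLike.ofReal ∘ hA.eigenvalues)) *
      star (hA.eigenvectorUnitary : Matrix (Fin n) (Fin n) ℂ) = (c:ℂ) • A := by
    rw [mul_smul_comm, smul_mul_assoc, ← (show A = (hA.eigenvectorUnitary : Matrix (Fin n) (Fin n) ℂ) * Matrix.diagonal (RCLike.ofReal ∘ hA.eigenvalues) * star (hA.eigenvectorUnitary : Matrix (Fin n) (Fin n) ℂ) from hA.spectral_theorem)]
  have h2 := conj_cancel hV (e1.trans e2.symm)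
  have h3 := congrFun (congrFun h2 i) i
  rw [diagonal_mul_diagonal] at h3
  simp only [diagonal_apply_eq, Function.comp, Matrix.smul_apply, smul_eq_mul] at h3
  have h4 : hA.eigenvalues i * hA.eigenvalues i = c * hA.eigenvalues i := by
    have h5 := congrArg Complex.re h3
    simpa using h5
  rcases eq_or_ne (hA.eigenvalues i) 0 with h0 | h0
  · exact Or.inl h0
  · exact Or.inr (mul_right_cancel₀ h0 h4)

lemma condF_eigProj (hc : 0 ≤ c) :
    condF ρ (eigProj h c) = (c * eigMult h c) * Real.log (eigMult h c) := by
  have hQρQ := eigProj_mul_rho_mul_eigProj h c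
  have hQh := eigProj_isHermitian h c
  have hA : ((c:ℂ) • eigProj h c).IsHermitian := by
    have : ((c:ℂ) • eigProj h c)ᴴ = (c:ℂ) • eigProj h c := by
      rw [conjTranspose_smul, hQh.eq]
      congr 1
      simp [Complex.star_def, Complex.conj_ofReal]
    exact this
  have hsq : ((c:ℂ) • eigProj h c) * ((c:ℂ) • eigProj h c)
      = (c:ℂ) • ((c:ℂ) • eigProj h c) := by
    rw [smul_mul_assoc, mul_smul_comm, eigProj_mul_self]
  have htrA : ((c:ℂ) • eigProj h c).trace = ((c * eigMult h c : ℝ) : ℂ) := by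
    rw [trace_smul, trace_eigProj]
    push_cast
    simp [smul_eq_mul]
  have hsum : ∑ i, hA.eigenvalues i = c * eigMult h c := by
    have h1 := trace_eq_sum_eig hA
    rw [htrA] at h1
    exact_mod_cast h1.symm
  have heig := fun i => eig_of_sq hA hsq i
  rw [condF, hQρQ, eta, dif_pos hA, htrA, Complex.ofReal_re]
  have hterm : ∀ i ∈ Finset.univ, hA.eigenvalues i * Real.log (hA.eigenvalues i)
      = hA.eigenvalues i * Real.log c := by
    intro i _
    rcases heig i with h0 | h0
    · rw [h0]; simp
    · rw [h0]
  rw [Finset.sum_congr rfl hterm, ← Finset.sum_mul, hsum]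
  rcases eq_or_lt_of_le hc with rfl | hcpos
  · simp
  rcases Nat.eq_zero_or_pos (eigMult h c) with hM | hM
  · rw [hM]; simp
  · have hM1 : (1:ℝ) ≤ (eigMult h c : ℝ) := by exact_mod_cast hM
    rw [Real.log_mul (ne_of_gt hcpos) (by positivity)]
    ring

end aux

/-- `S(ρ|ρ) = 0` iff all non-zero eigenvalues of `ρ` are non-degenerate,
i.e. every eigenspace of `ρ` for a positive eigenvalue is one-dimensional. -/
theorem condS_self_eq_zero_iff {n : ℕ} (hn : 1 ≤ n)
    (ρ : Matrix (Fin n) (Fin n) ℂ)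
    (hρ : ρ.PosSemidef) (hρ1 : ρ.trace = 1) :
    condS ρ ρ = 0 ↔ ∀ i j : Fin n, 0 < hρ.1.eigenvalues i →
      hρ.1.eigenvalues i = hρ.1.eigenvalues j → i = j := by
  have himg : ∀ c ∈ Finset.image hρ.1.eigenvalues Finset.univ, 0 ≤ c := by
    intro c hc
    obtain ⟨i, -, rfl⟩ := Finset.mem_image.mp hc
    exact hρ.eigenvalues_nonneg i
  have hrw : condS ρ ρ = ∑ c ∈ Finset.image hρ.1.eigenvalues Finset.univ,
      (c * eigMult hρ.1 c) * ((c * eigMult hρ.1 c) * Real.log (eigMult hρ.1 c)) := by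
    rw [condS, dif_pos hρ.1]
    refine Finset.sum_congr rfl fun c hc => ?_
    rw [trace_eigProj_mul_rho, condF_eigProj hρ.1 c (himg c hc), Complex.ofReal_re]
  have hnn : ∀ c ∈ Finset.image hρ.1.eigenvalues Finset.univ,
      0 ≤ (c * eigMult hρ.1 c) * ((c * eigMult hρ.1 c) * Real.log (eigMult hρ.1 c)) := by
    intro c hc
    have h1 : (0:ℝ) ≤ c * eigMult hρ.1 c := mul_nonneg (himg c hc) (Nat.cast_nonneg _)
    have h2 : (0:ℝ) ≤ Real.log (eigMult hρ.1 c) := by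
      rcases Nat.eq_zero_or_pos (eigMult hρ.1 c) with hM | hM
      · rw [hM]; simp
      · exact Real.log_nonneg (by exact_mod_cast hM)
    exact mul_nonneg h1 (mul_nonneg h1 h2)
  rw [hrw, Finset.sum_eq_zero_iff_of_nonneg hnn]
  constructor
  · intro H i j hi hij
    have hmem : hρ.1.eigenvalues i ∈ Finset.image hρ.1.eigenvalues Finset.univ :=
      Finset.mem_image_of_mem _ (Finset.mem_univ i)
    have hterm := H _ hmem
    have hM1 : 1 ≤ eigMult hρ.1 (hρ.1.eigenvalues i) := by
      rw [eigMult]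
      refine Finset.card_pos.mpr ⟨i, ?_⟩
      simp
    have hMpos : (0:ℝ) < (eigMult hρ.1 (hρ.1.eigenvalues i) : ℝ) := by
      exact_mod_cast hM1
    have hcM : 0 < hρ.1.eigenvalues i * eigMult hρ.1 (hρ.1.eigenvalues i) := mul_pos hi hMpos
    have hlog : Real.log (eigMult hρ.1 (hρ.1.eigenvalues i)) = 0 := by
      rcases mul_eq_zero.mp hterm with h0 | h0
      · exact absurd h0 (ne_of_gt hcM)
      rcases mul_eq_zero.mp h0 with h1 | h1
      · exact absurd h1 (ne_of_gt hcM)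
      · exact h1
    have hMeq : eigMult hρ.1 (hρ.1.eigenvalues i) = 1 := by
      have : (eigMult hρ.1 (hρ.1.eigenvalues i) : ℝ) = 1 := by
        rcases Real.log_eq_zero.mp hlog with h0 | h0 | h0
        · exact absurd h0 (ne_of_gt hMpos)
        · exact h0
        · linarith
      exact_mod_cast this
    have hle : (Finset.univ.filter
        (fun k => hρ.1.eigenvalues k = hρ.1.eigenvalues i)).card ≤ 1 := le_of_eq hMeq
    exact Finset.card_le_one.mp hle i (by simp) j (by simp [hij.symm])
  · intro H c hc
    obtain ⟨i, -, rfl⟩ := Finset.mem_image.mp hc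
    rcases eq_or_lt_of_le (hρ.eigenvalues_nonneg i) with h0 | hpos
    · rw [← h0]; simp
    · have hMeq : eigMult hρ.1 (hρ.1.eigenvalues i) = 1 := by
        rw [eigMult, Finset.card_eq_one]
        refine ⟨i, ?_⟩
        ext j
        simp only [Finset.mem_filter, Finset.mem_univ, true_and, Finset.mem_singleton]
        constructor
        · intro hj
          exact (H i j hpos hj.symm).symm
        · rintro rfl; rfl
      rw [hMeq]
      simp
end
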